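/- Let A be a finite subset of ℝ^d, let L ≥ 0, let S₀ ⊆ A, and suppose the lower confidence bounds are valid: l_n^i(a) ≤ g_i(a) for all n ≥ 1, all a ∈ A and all i = 1,…,q. Then the Lipschitz-based safe sets never exceed the safely reachable baseline: for every n ≥ 1, S_n ⊆ R_0^n(S₀), and hence S_n ⊆ R̄_0(S₀), where R_0 is the one-step safe expansion operator with accuracy parameter ε = 0 defined from the true constraint functions g_i. -/
import Mathlib


/-- The one-step safe expansion operator
`R_ε(S) = S ∪ ⋂_{i=1}^q {a ∈ A : ∃ a' ∈ S, g_i(a') - ε - L‖a - a'‖ ≥ 0}`. -/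
def Rstep {d q : ℕ} (A : Set (EuclideanSpace ℝ (Fin d)))
    (g : Fin q → EuclideanSpace ℝ (Fin d) → ℝ) (L ε : ℝ)
    (S : Set (EuclideanSpace ℝ (Fin d))) : Set (EuclideanSpace ℝ (Fin d)) :=
  S ∪ ⋂ i : Fin q, {a ∈ A | ∃ a' ∈ S, g i a' - ε - L * ‖a - a'‖ ≥ 0}

/-- The iterates of the one-step safe expansion operator:
`R_ε^0(S) = S` and `R_ε^{n+1}(S) = R_ε(R_ε^n(S))`. -/
def Riter {d q : ℕ} (A : Set (EuclideanSpace ℝ (Fin d)))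
    (g : Fin q → EuclideanSpace ℝ (Fin d) → ℝ) (L ε : ℝ)
    (S : Set (EuclideanSpace ℝ (Fin d))) : ℕ → Set (EuclideanSpace ℝ (Fin d))
  | 0 => S
  | n + 1 => Rstep A g L ε (Riter A g L ε S n)

/-- The safely reachable set `R̄_ε(S₀) = ⋃_{n ≥ 1} R_ε^n(S₀)`. -/
def Rbar {d q : ℕ} (A : Set (EuclideanSpace ℝ (Fin d)))
    (g : Fin q → EuclideanSpace ℝ (Fin d) → ℝ) (L ε : ℝ)
    (S₀ : Set (EuclideanSpace ℝ (Fin d))) : Set (EuclideanSpace ℝ (Fin d)) :=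
  ⋃ n ∈ {n : ℕ | 1 ≤ n}, Riter A g L ε S₀ n

/-- The Lipschitz-based safe sets of SafeOpt-MC:
`S_0 = S₀` and `S_n = ⋂_{i=1}^q ⋃_{a ∈ S_{n-1}} {a' ∈ A : l_n^i(a) - L‖a - a'‖ ≥ 0}`. -/
def safeSet {d q : ℕ} (A : Set (EuclideanSpace ℝ (Fin d)))
    (l : ℕ → Fin q → EuclideanSpace ℝ (Fin d) → ℝ) (L : ℝ)
    (S₀ : Set (EuclideanSpace ℝ (Fin d))) : ℕ → Set (EuclideanSpace ℝ (Fin d))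
  | 0 => S₀
  | n + 1 => ⋂ i : Fin q, ⋃ a ∈ safeSet A l L S₀ n,
      {a' ∈ A | l (n + 1) i a - L * ‖a - a'‖ ≥ 0}

/-- **The safe sets never exceed the reachable baseline.** If the lower confidence
bounds are valid, `l_n^i(a) ≤ g_i(a)` for all `n ≥ 1`, `a ∈ A`, `i`, then for every
`n ≥ 1` one has `S_n ⊆ R_0^n(S₀)` and hence `S_n ⊆ R̄_0(S₀)`, where `R_0` is the safe
expansion operator with accuracy `ε = 0` defined from the true constraints `g_i`. -/
theorem lipschitz_safe_set_subset_baseline {d q : ℕ}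
    (A : Set (EuclideanSpace ℝ (Fin d))) (hA : A.Finite)
    (g : Fin q → EuclideanSpace ℝ (Fin d) → ℝ) (L : ℝ) (hL : 0 ≤ L)
    (S₀ : Set (EuclideanSpace ℝ (Fin d))) (hS₀A : S₀ ⊆ A)
    (l : ℕ → Fin q → EuclideanSpace ℝ (Fin d) → ℝ)
    (hl : ∀ n : ℕ, 1 ≤ n → ∀ a ∈ A, ∀ i : Fin q, l n i a ≤ g i a) :
    ∀ n : ℕ, 1 ≤ n →
      safeSet A l L S₀ n ⊆ Riter A g L 0 S₀ n ∧
      safeSet A l L S₀ n ⊆ Rbar A g L 0 S₀ := by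
  have hsub : ∀ n : ℕ, safeSet A l L S₀ n ⊆ Riter A g L 0 S₀ n := by
    intro n
    induction n with
    | zero => simp [safeSet, Riter]
    | succ n ih =>
      intro a' ha'
      simp only [safeSet, Set.mem_iInter] at ha'
      show a' ∈ Rstep A g L 0 (Riter A g L 0 S₀ n)
      refine Or.inr (Set.mem_iInter.2 fun i => ?_)
      obtain ⟨a, haS, ha'A, hge⟩ := Set.mem_iUnion₂.1 (ha' i)
      have haA : a ∈ A := by
        match n, haS with
        | 0, haS => exact hS₀A haS
        | m + 1, haS =>
          obtain ⟨_, hb, hbA, _⟩ := Set.mem_iUnion₂.1 (Set.mem_iInter.1 haS i)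
          exact hbA
      refine ⟨ha'A, a, ih haS, ?_⟩
      have hle := hl (n + 1) (Nat.succ_le_succ (Nat.zero_le n)) a haA i
      rw [norm_sub_rev]
      linarith
  intro n hn
  refine ⟨hsub n, fun a ha => ?_⟩
  exact Set.mem_biUnion hn (hsub n ha)
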